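/- arXiv:2009.14128 — 5 statements merged into one kernel-verified Lean document; each statement's English description precedes it below -/
import Mathlib

section
/- Let k be a field and (A,A⁺) a local Huber pair where A is a k-algebra with maximal ideal m. An element ω ∈ Ω_{A/k} lies in the submodule N of logarithmic differentials if and only if there exists a finite family (f_i, g_i)_{i∈I} of pairs of elements of A such that ω = Σ_i f_i • D(g_i) and v(f_i) · v(g_i) ≤ 1 for every i ∈ I. (In other words, N is exactly the unit ball of the Kähler seminorm on Ω_{A/k}.) -/
/-- The set of basic logarithmic differentials in `Ω_{A/k}` attached to a local Huber
pair `(A, A⁺)` (with `A⁺ = v.integer = {a : v a ≤ 1}`): the differentials `D a` for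
`a ∈ A⁺` together with the logarithmic differentials `g⁻¹ • D g` for `g ∈ A⁺` a unit
of `A`. -/
def logDiffSet (k : Type) [Field k] {Γ₀ : Type} [LinearOrderedCommGroupWithZero Γ₀]
    {A : Type} [CommRing A] [Algebra k A] (v : Valuation A Γ₀) : Set (Ω[A⁄k]) :=
  {ω | ∃ a : A, v a ≤ 1 ∧ ω = KaehlerDifferential.D k A a} ∪
  {ω | ∃ g : A, v g ≤ 1 ∧ ∃ h : IsUnit g,
    ω = (↑h.unit⁻¹ : A) • KaehlerDifferential.D k A g}

/-- `N`, the `A⁺`-submodule of `Ω_{A/k}` (with scalars restricted along `A⁺ ⊆ A`)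
generated by the basic logarithmic differentials; it is the image in `Ω_{A/k}` of the
module of logarithmic differentials of `A⁺` with its total log structure. -/
noncomputable def logDiff (k : Type) [Field k] {Γ₀ : Type}
    [LinearOrderedCommGroupWithZero Γ₀] {A : Type} [CommRing A] [Algebra k A]
    (v : Valuation A Γ₀) : Submodule v.integer (Ω[A⁄k]) :=
  Submodule.span v.integer (logDiffSet k v)

/-!
A term `f • D g` with `v f * v g ≤ 1` and both valuations `≤ 1` is visibly in `N`. Otherwise the
factor of valuation `> 1` lies outside `v.supp = m`, hence is a unit `u`, and
`f • D u = (f * u) • dlog u`, `u • D g = D (u * g) - (u * g) • dlog u`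
express the term through elements of `A⁺`. Here `dlog u = u⁻¹ • D u` lies in `N` for every unit:
either `u` or `u⁻¹` lies in `A⁺`, and `dlog u⁻¹ = -dlog u`.
-/

namespace KaehlerDifferential

variable (k : Type*) [CommRing k] {A : Type*} [CommRing A] [Algebra k A]

noncomputable def dlog (u : Aˣ) : Ω[A⁄k] :=
  (↑u⁻¹ : A) • D k A u

variable {k}

theorem dlog_inv (u : Aˣ) : dlog k u⁻¹ = -dlog k u := by
  rw [dlog, dlog, inv_inv, (D k A).leibniz_of_mul_eq_one u.inv_mul, smul_smul,
    mul_neg, neg_smul, sq, ← mul_assoc, u.mul_inv, one_mul]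

theorem smul_D_unit (f : A) (u : Aˣ) : f • D k A u = (f * u) • dlog k u := by
  rw [dlog, smul_smul, mul_assoc, u.mul_inv, mul_one]

theorem unit_smul_D (u : Aˣ) (g : A) :
    (u : A) • D k A g = D k A (u * g) - ((u : A) * g) • dlog k u := by
  rw [(D k A).leibniz, smul_D_unit, mul_comm g, add_sub_cancel_right]

end KaehlerDifferential

open KaehlerDifferential

section KaehlerUnitBall

variable (k : Type*) [CommRing k] {Γ₀ : Type*} [LinearOrderedCommGroupWithZero Γ₀]
  {A : Type*} [CommRing A] [Algebra k A] (v : Valuation A Γ₀)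

noncomputable def kaehlerUnitBall : Submodule v.integer (Ω[A⁄k]) where
  carrier := {ω | ∃ (n : ℕ) (f g : Fin n → A),
    ω = ∑ i, f i • D k A (g i) ∧ ∀ i, v (f i) * v (g i) ≤ 1}
  zero_mem' := ⟨0, Fin.elim0, Fin.elim0, by simp, fun i => i.elim0⟩
  add_mem' := by
    rintro _ _ ⟨n, f, g, rfl, hfg⟩ ⟨m, f', g', rfl, hfg'⟩
    refine ⟨n + m, Fin.append f f', Fin.append g g', by simp [Fin.sum_univ_add], ?_⟩
    exact Fin.addCases (by simpa using hfg) (by simpa using hfg')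
  smul_mem' := by
    rintro ⟨a, ha⟩ _ ⟨n, f, g, rfl, hfg⟩
    refine ⟨n, fun i => a * f i, g, ?_, fun i => ?_⟩
    · change a • ∑ i, f i • D k A (g i) = _
      simp only [Finset.smul_sum, smul_smul]
    · rw [v.map_mul, mul_assoc]
      exact mul_le_one' ha (hfg i)

variable {k v}

theorem mem_kaehlerUnitBall {ω : Ω[A⁄k]} :
    ω ∈ kaehlerUnitBall k v ↔ ∃ (n : ℕ) (f g : Fin n → A),
      ω = ∑ i, f i • D k A (g i) ∧ ∀ i, v (f i) * v (g i) ≤ 1 :=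
  Iff.rfl

theorem smul_D_mem_kaehlerUnitBall {f g : A} (hfg : v f * v g ≤ 1) :
    f • D k A g ∈ kaehlerUnitBall k v :=
  mem_kaehlerUnitBall.mpr ⟨1, fun _ => f, fun _ => g, by simp, fun _ => hfg⟩

end KaehlerUnitBall

section LogDiff

variable {k : Type} [Field k] {Γ₀ : Type} [LinearOrderedCommGroupWithZero Γ₀]
  {A : Type} [CommRing A] [Algebra k A] {v : Valuation A Γ₀}

theorem logDiffSet_subset_kaehlerUnitBall : logDiffSet k v ⊆ kaehlerUnitBall k v := by
  rintro _ (⟨a, ha, rfl⟩ | ⟨g, -, hg, rfl⟩)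
  · simpa using smul_D_mem_kaehlerUnitBall (k := k) (f := (1 : A)) (by simpa using ha)
  · refine smul_D_mem_kaehlerUnitBall ?_
    rw [← v.map_mul, hg.val_inv_mul, v.map_one]

theorem D_mem_logDiff {a : A} (ha : v a ≤ 1) : D k A a ∈ logDiff k v :=
  Submodule.subset_span (Or.inl ⟨a, ha, rfl⟩)

theorem smul_mem_logDiff {a : A} (ha : v a ≤ 1) {ω : Ω[A⁄k]} (hω : ω ∈ logDiff k v) :
    a • ω ∈ logDiff k v :=
  Submodule.smul_mem _ (⟨a, ha⟩ : v.integer) hω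

theorem dlog_mem_logDiff_of_le_one {u : Aˣ} (hu : v u ≤ 1) : dlog k u ∈ logDiff k v := by
  refine Submodule.subset_span (Or.inr ⟨u, hu, u.isUnit, ?_⟩)
  rw [dlog, IsUnit.unit_of_val_units]

theorem dlog_mem_logDiff (u : Aˣ) : dlog k u ∈ logDiff k v := by
  rcases le_total (v u) 1 with hu | hu
  · exact dlog_mem_logDiff_of_le_one hu
  · have hu' : v (u⁻¹ : Aˣ) ≤ 1 := by
      rw [map_units_inv]
      exact inv_le_one_of_one_le₀ hu
    simpa [dlog_inv] using neg_mem (dlog_mem_logDiff_of_le_one (k := k) hu')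

theorem smul_D_unit_mem_logDiff {f : A} {u : Aˣ} (h : v (f * u) ≤ 1) :
    f • D k A u ∈ logDiff k v := by
  rw [smul_D_unit]
  exact smul_mem_logDiff h (dlog_mem_logDiff u)

theorem unit_smul_D_mem_logDiff {u : Aˣ} {g : A} (h : v (u * g) ≤ 1) :
    (u : A) • D k A g ∈ logDiff k v := by
  rw [unit_smul_D]
  exact sub_mem (D_mem_logDiff h) (smul_mem_logDiff h (dlog_mem_logDiff u))

end LogDiff

section LocalHuberPair

variable {k : Type} [Field k] {Γ₀ : Type} [LinearOrderedCommGroupWithZero Γ₀]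
  {A : Type} [CommRing A] [IsLocalRing A] [Algebra k A] {v : Valuation A Γ₀}

theorem isUnit_of_one_lt (hsupp : v.supp = IsLocalRing.maximalIdeal A) {a : A}
    (ha : 1 < v a) : IsUnit a := by
  rw [← IsLocalRing.notMem_maximalIdeal, ← hsupp, Valuation.mem_supp_iff]
  exact (zero_lt_one.trans ha).ne'

theorem smul_D_mem_logDiff (hsupp : v.supp = IsLocalRing.maximalIdeal A) {f g : A}
    (hfg : v f * v g ≤ 1) : f • D k A g ∈ logDiff k v := by
  rcases le_or_gt (v g) 1 with hg | hg
  · rcases le_or_gt (v f) 1 with hf | hf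
    · exact smul_mem_logDiff hf (D_mem_logDiff hg)
    · obtain ⟨u, rfl⟩ := isUnit_of_one_lt hsupp hf
      exact unit_smul_D_mem_logDiff (by rwa [v.map_mul])
  · obtain ⟨u, rfl⟩ := isUnit_of_one_lt hsupp hg
    exact smul_D_unit_mem_logDiff (by rwa [v.map_mul])

theorem logDiff_eq_kaehlerUnitBall (hsupp : v.supp = IsLocalRing.maximalIdeal A) :
    logDiff k v = kaehlerUnitBall k v := by
  refine le_antisymm (Submodule.span_le.mpr logDiffSet_subset_kaehlerUnitBall) ?_
  intro ω hω
  obtain ⟨n, f, g, rfl, hfg⟩ := mem_kaehlerUnitBall.mp hω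
  exact sum_mem fun i _ => smul_D_mem_logDiff hsupp (hfg i)

end LocalHuberPair

/-- For a local Huber pair `(A, A⁺)` over a field `k`, a differential
`ω ∈ Ω_{A/k}` lies in the submodule `N` of logarithmic differentials if and only
if there is a finite family `(fᵢ, gᵢ)` of pairs of elements of `A` with
`ω = Σ fᵢ • D gᵢ` and `v fᵢ * v gᵢ ≤ 1` for all `i`: `N` is exactly the unit
ball of the Kähler seminorm on `Ω_{A/k}`. -/
theorem logDiff_eq_unitBall_kaehlerSeminorm
    (k : Type) [Field k] (Γ₀ : Type) [LinearOrderedCommGroupWithZero Γ₀]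
    (A : Type) [CommRing A] [IsLocalRing A] [Algebra k A]
    (v : Valuation A Γ₀)
    (hsupp : v.supp = IsLocalRing.maximalIdeal A)
    (ω : Ω[A⁄k]) :
    ω ∈ logDiff k v ↔ ∃ (n : ℕ) (f g : Fin n → A),
      ω = ∑ i, f i • KaehlerDifferential.D k A (g i) ∧
      ∀ i, v (f i) * v (g i) ≤ 1 :=
  (SetLike.ext_iff.mp (logDiff_eq_kaehlerUnitBall hsupp) ω).trans mem_kaehlerUnitBall
end

section
/- Let k be a field and (A,A⁺) a local Huber pair where A is a k-algebra with maximal ideal m. Let p : Ω_{A/k} → Γ₀ be a function satisfying: (i) p(ω + ω') ≤ max(p(ω), p(ω')) for all ω, ω'; (ii) p(a • ω) = v(a) · p(ω) for all a ∈ A and ω; (iii) p(D a) ≤ 1 for every a ∈ A⁺; (iv) p(g⁻¹ • D g) ≤ 1 for every g ∈ A⁺ that is a unit of A; (v) p(D x) = 0 for every x ∈ m. Then for every ω ∈ Ω_{A/k} and every representation ω = Σ_i f_i • D(g_i) as a finite sum with f_i, g_i ∈ A, one has p(ω) ≤ max_i v(f_i) · v(g_i). (In other words, the Kähler seminorm is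 the maximal A-seminorm on Ω_{A/k} that is ≤ 1 on logarithmic differentials and vanishes on D x for x ∈ m.) -/
/-!
A differential `D a` with `a ∈ m` is killed by `p`. Otherwise `a` is a unit, and
`p (D a) ≤ v a` amounts to `p (a⁻¹ • D a) ≤ 1`: this is the logarithmic bound for `a`
if `v a ≤ 1`, and otherwise the logarithmic bound for `a⁻¹`, because
`a • D (a⁻¹) = -(a⁻¹ • D a)`. The ultrametric inequality then bounds any
`p (Σ fᵢ • D gᵢ)` by `max_i v fᵢ * v gᵢ`.
-/

/-- In a linearly ordered commutative group with zero, `0` is a bottom element;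
this makes `Finset.sup` (the maximum, with value `0` on the empty family)
available. -/
noncomputable instance instOrderBotOfLinearOrderedCommGroupWithZero
    (Γ₀ : Type) [LinearOrderedCommGroupWithZero Γ₀] : OrderBot Γ₀ where
  bot := 0
  bot_le _ := zero_le'

theorem Derivation.units_smul_map_units_inv {R A M : Type*} [CommRing R] [CommRing A]
    [Algebra R A] [AddCommGroup M] [Module A M] [Module R M] (D : Derivation R A M) (u : Aˣ) :
    (u : A) • D ↑u⁻¹ = -((↑u⁻¹ : A) • D u) := by
  rw [D.leibniz_of_mul_eq_one (Units.inv_mul u), neg_smul, smul_neg, smul_smul, sq, ← mul_assoc,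
    Units.mul_inv, one_mul]

namespace Valuation

variable {A M Γ₀ : Type*} [CommRing A] [AddCommGroup M] [Module A M]
  [LinearOrderedCommGroupWithZero Γ₀] (v : Valuation A Γ₀) {p : M → Γ₀}

section SMulCompatible

variable (hsmul : ∀ (a : A) (ω : M), p (a • ω) = v a * p ω)
include hsmul

theorem apply_zero_of_smul_eq : p 0 = 0 := by
  simpa using hsmul 0 0

theorem apply_neg_of_smul_eq (ω : M) : p (-ω) = p ω := by
  rw [← neg_one_smul A ω, hsmul, map_neg, map_one, one_mul]

theorem le_of_apply_units_inv_smul_le_one {u : Aˣ} {ω : M} (h : p ((↑u⁻¹ : A) • ω) ≤ 1) :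
    p ω ≤ v u := by
  rwa [hsmul, map_units_inv, inv_mul_le_one₀ (zero_lt_iff.mpr (u.isUnit.map v).ne_zero)] at h

variable {R : Type*} [CommRing R] [Algebra R A] [Module R M] (D : Derivation R A M)

theorem apply_derivation_units_le (hlog : ∀ u : Aˣ, v u ≤ 1 → p ((↑u⁻¹ : A) • D u) ≤ 1)
    (u : Aˣ) : p (D u) ≤ v u := by
  refine v.le_of_apply_units_inv_smul_le_one hsmul ?_
  rcases le_or_gt (v u) 1 with hle | hgt
  · exact hlog u hle
  · have hinv : v ↑u⁻¹ ≤ 1 := by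
      rw [map_units_inv]
      exact inv_le_one_of_one_le₀ hgt.le
    simpa only [inv_inv, D.units_smul_map_units_inv, v.apply_neg_of_smul_eq hsmul]
      using hlog u⁻¹ hinv

theorem apply_derivation_le [IsLocalRing A]
    (hm : ∀ x ∈ IsLocalRing.maximalIdeal A, p (D x) = 0)
    (hlog : ∀ u : Aˣ, v u ≤ 1 → p ((↑u⁻¹ : A) • D u) ≤ 1) (a : A) : p (D a) ≤ v a := by
  by_cases ha : a ∈ IsLocalRing.maximalIdeal A
  · exact (hm a ha).trans_le zero_le
  · obtain ⟨u, rfl⟩ := IsLocalRing.notMem_maximalIdeal.mp ha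
    exact v.apply_derivation_units_le hsmul D hlog u

end SMulCompatible

end Valuation

theorem Finset.apply_sum_le_sup {ι M Γ : Type*} [AddCommMonoid M] [LinearOrder Γ] [OrderBot Γ]
    {p : M → Γ} (hzero : p 0 = ⊥) (hadd : ∀ x y, p (x + y) ≤ max (p x) (p y))
    (s : Finset ι) (x : ι → M) : p (∑ i ∈ s, x i) ≤ s.sup fun i => p (x i) := by
  induction s using Finset.cons_induction with
  | empty => simp [hzero]
  | cons j s hj ih =>
    rw [Finset.sum_cons, Finset.sup_cons]
    exact (hadd _ _).trans (max_le_max le_rfl ih)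

theorem seminorm_le_kaehlerSeminorm_general
    (k : Type) [Field k] (Γ₀ : Type) [LinearOrderedCommGroupWithZero Γ₀]
    (A : Type) [CommRing A] [IsLocalRing A] [Algebra k A]
    (v : Valuation A Γ₀)
    (p : Ω[A⁄k] → Γ₀)
    (hadd : ∀ ω ω' : Ω[A⁄k], p (ω + ω') ≤ max (p ω) (p ω'))
    (hsmul : ∀ (a : A) (ω : Ω[A⁄k]), p (a • ω) = v a * p ω)
    (hlog : ∀ g : A, v g ≤ 1 → ∀ h : IsUnit g,
      p ((↑h.unit⁻¹ : A) • KaehlerDifferential.D k A g) ≤ 1)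
    (hm : ∀ x ∈ IsLocalRing.maximalIdeal A, p (KaehlerDifferential.D k A x) = 0)
    (ω : Ω[A⁄k]) (n : ℕ) (f g : Fin n → A)
    (hω : ω = ∑ i, f i • KaehlerDifferential.D k A (g i)) :
    p ω ≤ Finset.univ.sup fun i => v (f i) * v (g i) := by
  have hlog' (u : Aˣ) (hu : v u ≤ 1) : p ((↑u⁻¹ : A) • KaehlerDifferential.D k A u) ≤ 1 := by
    simpa only [IsUnit.unit_of_val_units] using hlog u hu u.isUnit
  rw [hω]
  refine (Finset.apply_sum_le_sup (v.apply_zero_of_smul_eq hsmul) hadd _ _).trans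
    (Finset.sup_mono_fun fun i _ => ?_)
  rw [hsmul]
  exact mul_le_mul_right (v.apply_derivation_le hsmul _ hm hlog' (g i)) _

/-- Maximality of the Kähler seminorm: for a local Huber pair `(A, A⁺)` over a
field `k`, any `Γ₀`-valued `A`-seminorm `p` on `Ω_{A/k}` (ultrametric and
multiplicative for the `A`-action) which is `≤ 1` on the logarithmic differentials
`D a` (`a ∈ A⁺`) and `g⁻¹ • D g` (`g ∈ A⁺` a unit of `A`) and vanishes on `D x`
for `x` in the maximal ideal satisfies `p ω ≤ max_i (v fᵢ * v gᵢ)` for every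
representation `ω = Σ fᵢ • D gᵢ`; hence `p` is dominated by the Kähler seminorm. -/
theorem seminorm_le_kaehlerSeminorm
    (k : Type) [Field k] (Γ₀ : Type) [LinearOrderedCommGroupWithZero Γ₀]
    (A : Type) [CommRing A] [IsLocalRing A] [Algebra k A]
    (v : Valuation A Γ₀)
    (hsupp : v.supp = IsLocalRing.maximalIdeal A)
    (p : Ω[A⁄k] → Γ₀)
    (hadd : ∀ ω ω' : Ω[A⁄k], p (ω + ω') ≤ max (p ω) (p ω'))
    (hsmul : ∀ (a : A) (ω : Ω[A⁄k]), p (a • ω) = v a * p ω)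
    (hd : ∀ a : A, v a ≤ 1 → p (KaehlerDifferential.D k A a) ≤ 1)
    (hlog : ∀ g : A, v g ≤ 1 → ∀ h : IsUnit g,
      p ((↑h.unit⁻¹ : A) • KaehlerDifferential.D k A g) ≤ 1)
    (hm : ∀ x ∈ IsLocalRing.maximalIdeal A, p (KaehlerDifferential.D k A x) = 0)
    (ω : Ω[A⁄k]) (n : ℕ) (f g : Fin n → A)
    (hω : ω = ∑ i, f i • KaehlerDifferential.D k A (g i)) :
    p ω ≤ Finset.univ.sup fun i => v (f i) * v (g i) :=
  seminorm_le_kaehlerSeminorm_general k Γ₀ A v p hadd hsmul hlog hm ω n f g hω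
end

section
/- Let k be a field and (A,A⁺) a local Huber pair where A is a k-algebra with maximal ideal m. Then for every x ∈ m and every a⁺ ∈ A⁺ with a⁺ ∉ m, the differential D x lies in a⁺ • N, where N is the submodule of logarithmic differentials. (This expresses that the adic seminorm of D x on logarithmic differentials vanishes for x ∈ m.) -/
namespace LogDiff

variable {k : Type} [Field k] {Γ₀ : Type} [LinearOrderedCommGroupWithZero Γ₀]
  {A : Type} [CommRing A] [Algebra k A] (v : Valuation A Γ₀)

theorem d_mem {a : A} (ha : v a ≤ 1) : KaehlerDifferential.D k A a ∈ logDiff k v :=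
  Submodule.subset_span (Or.inl ⟨a, ha, rfl⟩)

theorem dlog_mem {g : A} (hg : v g ≤ 1) (h : IsUnit g) :
    (↑h.unit⁻¹ : A) • KaehlerDifferential.D k A g ∈ logDiff k v :=
  Submodule.subset_span (Or.inr ⟨g, hg, h, rfl⟩)

theorem d_mul_eq_smul_add_dlog {R M : Type*} [CommRing R] [Algebra R A] [AddCommGroup M]
    [Module A M] [Module R M] (d : Derivation R A M) {u : A} (hu : IsUnit u) (y : A) :
    d (u * y) = u • (d y + y • (↑hu.unit⁻¹ : A) • d u) := by
  rw [Derivation.leibniz, smul_add, smul_comm u y, smul_smul u, hu.mul_val_inv, one_smul]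

theorem exists_d_mul_eq_smul {u y : A} (hu : IsUnit u) (hvu : v u ≤ 1) (hvy : v y ≤ 1) :
    ∃ η ∈ logDiff k v, KaehlerDifferential.D k A (u * y) = u • η :=
  ⟨_, Submodule.add_mem _ (d_mem v hvy)
      (Submodule.smul_mem _ (⟨y, hvy⟩ : v.integer) (dlog_mem v hvu hu)),
    d_mul_eq_smul_add_dlog _ hu y⟩

end LogDiff

/-- For a local Huber pair `(A, A⁺)` over a field `k`, every `x` in the maximal
ideal `m` of `A` and every `a⁺ ∈ A⁺ \ m` satisfy `D x ∈ a⁺ • N`, where `N`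
is the submodule of logarithmic differentials: the adic seminorm of `D x` on
logarithmic differentials vanishes for `x ∈ m`. -/
theorem d_mem_smul_logDiff_of_mem_maximalIdeal
    (k : Type) [Field k] (Γ₀ : Type) [LinearOrderedCommGroupWithZero Γ₀]
    (A : Type) [CommRing A] [IsLocalRing A] [Algebra k A]
    (v : Valuation A Γ₀)
    (hsupp : v.supp = IsLocalRing.maximalIdeal A)
    (x : A) (hx : x ∈ IsLocalRing.maximalIdeal A)
    (a : A) (ha : v a ≤ 1) (ha' : a ∉ IsLocalRing.maximalIdeal A) :
    ∃ η ∈ logDiff k v, KaehlerDifferential.D k A x = a • η := by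
  have hu : IsUnit a := IsLocalRing.notMem_maximalIdeal.mp ha'
  have hvx : v x = 0 := (v.mem_supp_iff x).mp (hsupp ▸ hx)
  have hvy : v ((↑hu.unit⁻¹ : A) * x) ≤ 1 := by
    rw [map_mul, hvx, mul_zero]
    exact zero_le
  have hxy : a * ((↑hu.unit⁻¹ : A) * x) = x := by
    rw [← mul_assoc, hu.mul_val_inv, one_mul]
  simpa only [hxy] using LogDiff.exists_d_mul_eq_smul v hu ha hvy
end

section
/- Let (A,A⁺) be a local Huber pair, with A a local ring with maximal ideal m. Then A is the localization of A⁺ at the multiplicative subset S := A⁺ \ m: every element of S is invertible in A, and every element of A can be written as a⁺ · s⁻¹ with a⁺ ∈ A⁺ and s ∈ S; in particular the inclusion A⁺ ⊆ A exhibits A as the localization of A⁺ at the submonoid S. -/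
/-! An element `a` of `A` with `v a ≤ 1` is `a / 1`. Otherwise `v a > 1`, so `a ∉ m = supp v`,
hence `a` is a unit of the local ring `A`, and `v a⁻¹ = (v a)⁻¹ < 1` exhibits `a = 1 / a⁻¹` with
`a⁻¹ ∈ A⁺ \ m`. Since elements outside `m` are units of `A`, this is exactly the localization
property of `A⁺ ⊆ A` at `A⁺ \ m`. -/

open IsLocalRing

namespace Valuation

variable {A Γ₀ : Type*} [CommRing A] [IsLocalRing A] [LinearOrderedCommGroupWithZero Γ₀]
  (v : Valuation A Γ₀)

theorem isUnit_of_ne_zero_of_maximalIdeal_le_supp (hsupp : maximalIdeal A ≤ v.supp) {a : A}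
    (ha : v a ≠ 0) : IsUnit a :=
  notMem_maximalIdeal.mp fun hm => ha (hsupp hm)

theorem exists_integer_mul_eq_of_maximalIdeal_le_supp (hsupp : maximalIdeal A ≤ v.supp)
    (a : A) : ∃ x s : A, v x ≤ 1 ∧ v s ≤ 1 ∧ s ∉ maximalIdeal A ∧ a * s = x := by
  by_cases ha : v a ≤ 1
  · exact ⟨a, 1, ha, v.map_one.le, notMem_maximalIdeal.mpr isUnit_one, mul_one a⟩
  · have hgt : 1 < v a := not_le.mp ha
    have hu : IsUnit a :=
      v.isUnit_of_ne_zero_of_maximalIdeal_le_supp hsupp (zero_lt_one.trans hgt).ne'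
    have hinv : v ↑hu.unit⁻¹ ≤ 1 := by
      rw [map_units_inv, IsUnit.unit_spec]
      exact inv_le_one_of_one_le₀ hgt.le
    exact ⟨1, ↑hu.unit⁻¹, v.map_one.le, hinv, notMem_maximalIdeal.mpr hu.unit⁻¹.isUnit,
      hu.mul_val_inv⟩

theorem isLocalization_integer_of_maximalIdeal_le_supp (hsupp : maximalIdeal A ≤ v.supp) :
    IsLocalization ((maximalIdeal A).primeCompl.comap (algebraMap v.integer A)) A where
  map_units s := notMem_maximalIdeal.mp s.2
  surj a := by
    obtain ⟨x, s, hx, hs, hsm, hxs⟩ := v.exists_integer_mul_eq_of_maximalIdeal_le_supp hsupp a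
    exact ⟨⟨⟨x, hx⟩, ⟨⟨s, hs⟩, hsm⟩⟩, hxs⟩
  exists_of_eq h := ⟨1, by rw [Subtype.val_injective h]⟩

end Valuation

/-- For a local Huber pair `(A, A⁺)` (a local ring `A` with maximal ideal `m`,
equipped with a valuation `v` supported at `m`, with `A⁺ = v.integer`), the ring
`A` is the localization of `A⁺` at the multiplicative subset `S = A⁺ \ m`:
every element of `S` is invertible in `A`, every element of `A` can be written
as `a⁺ * s⁻¹` with `a⁺ ∈ A⁺` and `s ∈ S`, and the inclusion `A⁺ ⊆ A` exhibits
`A` as the localization of `A⁺` at the submonoid `S`. -/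
theorem localHuberPair_isLocalization
    (Γ₀ : Type) [LinearOrderedCommGroupWithZero Γ₀]
    (A : Type) [CommRing A] [IsLocalRing A]
    (v : Valuation A Γ₀)
    (hsupp : v.supp = IsLocalRing.maximalIdeal A) :
    (∀ s : A, v s ≤ 1 → s ∉ IsLocalRing.maximalIdeal A → IsUnit s) ∧
    (∀ a : A, ∃ x s : A, v x ≤ 1 ∧ v s ≤ 1 ∧ s ∉ IsLocalRing.maximalIdeal A ∧
      ∃ h : IsUnit s, a = x * ↑h.unit⁻¹) ∧
    IsLocalization
      ((IsLocalRing.maximalIdeal A).primeCompl.comap (algebraMap v.integer A)) A := by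
  refine ⟨fun s _ hs => notMem_maximalIdeal.mp hs, fun a => ?_,
    v.isLocalization_integer_of_maximalIdeal_le_supp hsupp.ge⟩
  obtain ⟨x, s, hx, hs, hsm, hxs⟩ := v.exists_integer_mul_eq_of_maximalIdeal_le_supp hsupp.ge a
  have hu : IsUnit s := notMem_maximalIdeal.mp hsm
  exact ⟨x, s, hx, hs, hsm, hu, hu.unit.eq_mul_inv_iff_mul_eq.mpr hxs⟩
end

section
/- Let (A,A⁺), (B,B⁺), (C,C⁺) be strict pairs of commutative rings, and let A → B and A → C be ring homomorphisms mapping A⁺ into B⁺ and into C⁺ respectively. Let D := B ⊗_A C and let D⁺ be the subring of D generated by the images of B⁺ (under b ↦ b ⊗ 1) and of C⁺ (under c ↦ 1 ⊗ c). Then (D, D⁺) is strict; more precisely, every element d ∈ D can be written as d = d⁺ · (s ⊗ t)⁻¹ with d⁺ ∈ D⁺, s ∈ B⁺ a unit of B, and t ∈ C⁺ a unit of C (note s ⊗ t ∈ D⁺ is then a unit of D). Consequently D is the localization of D⁺ at the submonoid D⁺ ∩ D^× of elements of D⁺ that are invertible in D. -/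
open scoped TensorProduct

/-- A pair `(A, A⁺)` of a commutative ring and a subring is *strict* if every
element of `A` can be written as `a⁺ * s⁻¹` with `a⁺ ∈ A⁺` and `s ∈ A⁺` a unit
of `A` (equivalently, `A` is the localization of `A⁺` at `A⁺ ∩ A^×`). -/
def IsStrictPair {A : Type} [CommRing A] (Ap : Subring A) : Prop :=
  ∀ a : A, ∃ x s : Ap, ∃ h : IsUnit (s : A), a = (x : A) * ↑h.unit⁻¹

/-- The submonoid `A⁺ ∩ A^×` of a subring `A⁺ ⊆ A`: the elements of `A⁺` that
are invertible in `A`. -/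
def Subring.unitsIn {A : Type} [CommRing A] (Ap : Subring A) : Submonoid Ap where
  carrier := {x | IsUnit (x : A)}
  one_mem' := by simp
  mul_mem' := by
    intro a b ha hb
    simpa using ha.mul hb

/-!
If `b s = b⁺` and `c t = c⁺` clear the denominators of `b` and `c`, then `s ⊗ t` clears the
denominator of `b ⊗ c`, and the product of two such denominators clears that of a sum.
Since `D = B ⊗ C` is additively spanned by pure tensors, every `d ∈ D` has a denominator
`s ⊗ t` with `s ∈ B⁺ ∩ B^×` and `t ∈ C⁺ ∩ C^×`.
-/

theorem isStrictPair_iff {A : Type} [CommRing A] (Ap : Subring A) :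
    IsStrictPair Ap ↔ ∀ a : A, ∃ s ∈ Ap, IsUnit s ∧ a * s ∈ Ap := by
  constructor
  · intro h a
    obtain ⟨x, s, hs, rfl⟩ := h a
    refine ⟨s, s.2, hs, ?_⟩
    rw [mul_assoc, IsUnit.val_inv_mul, mul_one]
    exact x.2
  · intro h a
    obtain ⟨s, hsp, hs, hx⟩ := h a
    refine ⟨⟨a * s, hx⟩, ⟨s, hsp⟩, hs, ?_⟩
    rw [mul_assoc, IsUnit.mul_val_inv, mul_one]

theorem isLocalization_of_isStrictPair {A : Type} [CommRing A] (Ap : Subring A)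
    (h : IsStrictPair Ap) : IsLocalization Ap.unitsIn A where
  map_units y := y.2
  surj z := by
    obtain ⟨s, hsp, hs, hx⟩ := (isStrictPair_iff Ap).1 h z
    exact ⟨(⟨z * s, hx⟩, ⟨⟨s, hsp⟩, hs⟩), rfl⟩
  exists_of_eq h := ⟨1, by rw [Subtype.ext h]⟩

section TensorProduct

variable {A B C : Type} [CommRing A] [CommRing B] [CommRing C] [Algebra A B] [Algebra A C]

theorem tmul_eq_tmul_one_mul_one_tmul (b : B) (c : C) :
    (b ⊗ₜ[A] c : B ⊗[A] C) = (b ⊗ₜ[A] (1 : C)) * ((1 : B) ⊗ₜ[A] c) := by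
  rw [Algebra.TensorProduct.tmul_mul_tmul, mul_one, one_mul]

theorem isUnit_tmul {s : B} {t : C} (hs : IsUnit s) (ht : IsUnit t) :
    IsUnit (s ⊗ₜ[A] t : B ⊗[A] C) := by
  rw [tmul_eq_tmul_one_mul_one_tmul]
  exact (hs.map (Algebra.TensorProduct.includeLeft : B →ₐ[A] B ⊗[A] C)).mul
    (ht.map Algebra.TensorProduct.includeRight)

theorem tmul_mem_closure {Bp : Subring B} {Cp : Subring C} {b : B} {c : C}
    (hb : b ∈ Bp) (hc : c ∈ Cp) :
    (b ⊗ₜ[A] c : B ⊗[A] C) ∈ Subring.closure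
      ({x | ∃ b ∈ Bp, x = b ⊗ₜ[A] (1 : C)} ∪ {x | ∃ c ∈ Cp, x = (1 : B) ⊗ₜ[A] c}) := by
  rw [tmul_eq_tmul_one_mul_one_tmul]
  exact Subring.mul_mem _ (Subring.subset_closure (Or.inl ⟨b, hb, rfl⟩))
    (Subring.subset_closure (Or.inr ⟨c, hc, rfl⟩))

theorem exists_tmul_mul_mem {Bp : Subring B} {Cp : Subring C} (hB : IsStrictPair Bp)
    (hC : IsStrictPair Cp) {Dp : Subring (B ⊗[A] C)}
    (hDp : ∀ b ∈ Bp, ∀ c ∈ Cp, b ⊗ₜ[A] c ∈ Dp) (d : B ⊗[A] C) :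
    ∃ (s : B) (t : C), s ∈ Bp ∧ IsUnit s ∧ t ∈ Cp ∧ IsUnit t ∧ d * (s ⊗ₜ[A] t) ∈ Dp := by
  induction d with
  | zero => exact ⟨1, 1, Bp.one_mem, isUnit_one, Cp.one_mem, isUnit_one, by simp⟩
  | tmul b c =>
    obtain ⟨s, hsp, hs, hbs⟩ := (isStrictPair_iff Bp).1 hB b
    obtain ⟨t, htp, ht, hct⟩ := (isStrictPair_iff Cp).1 hC c
    refine ⟨s, t, hsp, hs, htp, ht, ?_⟩
    rw [Algebra.TensorProduct.tmul_mul_tmul]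
    exact hDp _ hbs _ hct
  | add d₁ d₂ h₁ h₂ =>
    obtain ⟨s₁, t₁, hsp₁, hs₁, htp₁, ht₁, hd₁⟩ := h₁
    obtain ⟨s₂, t₂, hsp₂, hs₂, htp₂, ht₂, hd₂⟩ := h₂
    refine ⟨s₁ * s₂, t₁ * t₂, Bp.mul_mem hsp₁ hsp₂, hs₁.mul hs₂,
      Cp.mul_mem htp₁ htp₂, ht₁.mul ht₂, ?_⟩
    have hsplit : (d₁ + d₂) * ((s₁ * s₂) ⊗ₜ[A] (t₁ * t₂)) =
        d₁ * (s₁ ⊗ₜ[A] t₁) * (s₂ ⊗ₜ[A] t₂) + d₂ * (s₂ ⊗ₜ[A] t₂) * (s₁ ⊗ₜ[A] t₁) := by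
      rw [← Algebra.TensorProduct.tmul_mul_tmul]
      ring
    rw [hsplit]
    exact Dp.add_mem (Dp.mul_mem hd₁ (hDp _ hsp₂ _ htp₂))
      (Dp.mul_mem hd₂ (hDp _ hsp₁ _ htp₁))

end TensorProduct

theorem isStrictPair_tensorProduct_general
    (A B C : Type) [CommRing A] [CommRing B] [CommRing C]
    [Algebra A B] [Algebra A C]
    (Bp : Subring B) (Cp : Subring C)
    (hB : IsStrictPair Bp) (hC : IsStrictPair Cp)
    (Dp : Subring (B ⊗[A] C))
    (hDp : Dp = Subring.closure
      ({x | ∃ b ∈ Bp, x = b ⊗ₜ[A] (1 : C)} ∪ {x | ∃ c ∈ Cp, x = (1 : B) ⊗ₜ[A] c})) :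
    (∀ d : B ⊗[A] C, ∃ dp ∈ Dp, ∃ (s : B) (t : C), s ∈ Bp ∧ IsUnit s ∧ t ∈ Cp ∧
      IsUnit t ∧ ∃ h : IsUnit (s ⊗ₜ[A] t : B ⊗[A] C), d = dp * ↑h.unit⁻¹) ∧
    IsStrictPair Dp ∧
    IsLocalization Dp.unitsIn (B ⊗[A] C) := by
  have hmem : ∀ b ∈ Bp, ∀ c ∈ Cp, b ⊗ₜ[A] c ∈ Dp := fun _ hb _ hc =>
    hDp ▸ tmul_mem_closure hb hc
  have hden := exists_tmul_mul_mem hB hC hmem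
  have hstrict : IsStrictPair Dp := by
    refine (isStrictPair_iff Dp).2 fun d => ?_
    obtain ⟨s, t, hsp, hs, htp, ht, hd⟩ := hden d
    exact ⟨s ⊗ₜ[A] t, hmem s hsp t htp, isUnit_tmul hs ht, hd⟩
  refine ⟨fun d => ?_, hstrict, isLocalization_of_isStrictPair Dp hstrict⟩
  obtain ⟨s, t, hsp, hs, htp, ht, hd⟩ := hden d
  refine ⟨_, hd, s, t, hsp, hs, htp, ht, isUnit_tmul hs ht, ?_⟩
  rw [mul_assoc, IsUnit.mul_val_inv, mul_one]

/-- Let `(A, A⁺)`, `(B, B⁺)`, `(C, C⁺)` be strict pairs, with `B`, `C` algebras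
over `A` whose structure maps send `A⁺` into `B⁺` resp. `C⁺`.  Let `D = B ⊗[A] C`
and let `D⁺` be the subring of `D` generated by the images of `B⁺` and `C⁺`.
Then every `d ∈ D` can be written as `d = d⁺ * (s ⊗ t)⁻¹` with `d⁺ ∈ D⁺`,
`s ∈ B⁺` a unit of `B`, `t ∈ C⁺` a unit of `C` (and `s ⊗ t` a unit of `D`);
in particular `(D, D⁺)` is strict, and `D` is the localization of `D⁺` at the
submonoid `D⁺ ∩ D^×`. -/
theorem isStrictPair_tensorProduct
    (A B C : Type) [CommRing A] [CommRing B] [CommRing C]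
    [Algebra A B] [Algebra A C]
    (Ap : Subring A) (Bp : Subring B) (Cp : Subring C)
    (hA : IsStrictPair Ap) (hB : IsStrictPair Bp) (hC : IsStrictPair Cp)
    (hAB : ∀ a ∈ Ap, algebraMap A B a ∈ Bp)
    (hAC : ∀ a ∈ Ap, algebraMap A C a ∈ Cp)
    (Dp : Subring (B ⊗[A] C))
    (hDp : Dp = Subring.closure
      ({x | ∃ b ∈ Bp, x = b ⊗ₜ[A] (1 : C)} ∪ {x | ∃ c ∈ Cp, x = (1 : B) ⊗ₜ[A] c})) :
    (∀ d : B ⊗[A] C, ∃ dp ∈ Dp, ∃ (s : B) (t : C), s ∈ Bp ∧ IsUnit s ∧ t ∈ Cp ∧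
      IsUnit t ∧ ∃ h : IsUnit (s ⊗ₜ[A] t : B ⊗[A] C), d = dp * ↑h.unit⁻¹) ∧
    IsStrictPair Dp ∧
    IsLocalization Dp.unitsIn (B ⊗[A] C) :=
  isStrictPair_tensorProduct_general A B C Bp Cp hB hC Dp hDp
end
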